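/- arXiv:0806.1818 — 3 statements merged into one kernel-verified Lean document; each statement's English description precedes it below -/
import Mathlib

section
/- For every line l (indeed for every subset l ⊆ E with r(l) ≤ 2) and all flats S, T of M, the inequality a(S)_l + a(T)_l ≤ a(cl(S ∪ T))_l + a(S ∩ T)_l holds; i.e., the function F ↦ a(F)_l is supermodular on the lattice of flats of M. -/
open Set

variable {α : Type*}

/-- The rank of a set in a matroid: the supremum of the cardinalities of its
independent subsets. -/
noncomputable def Matroid.rk' (M : Matroid α) (X : Set α) : ℕ :=
  sSup {n : ℕ | ∃ I, M.Indep I ∧ I ⊆ X ∧ I.ncard = n}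

/-- A matroid is loopless if the closure of the empty set is empty. -/
def Matroid.Loopless' (M : Matroid α) : Prop := M.closure ∅ = ∅

/-- A line of a matroid: a subset of the ground set of rank 1 or 2. -/
def Matroid.IsLine (M : Matroid α) (l : Set α) : Prop :=
  l ⊆ M.E ∧ (M.rk' l = 1 ∨ M.rk' l = 2)

open scoped Classical in
/-- Degree `a(X)_l` of a set `X` at a line `l`. -/
noncomputable def deg (X l : Set α) : ℕ :=
  if X ∩ l = ∅ then 0 else if l ⊆ X then 2 else 1

/-- A fractional matching of the pair `(M, L)`. -/
def IsFracMatching (M : Matroid α) (L : Finset (Set α)) (x : Set α → ℝ) : Prop :=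
  (∀ l ∈ L, 0 ≤ x l) ∧
  ∀ F : Set α, M.IsFlat F → ∑ l ∈ L, (deg F l : ℝ) * x l ≤ (M.rk' F : ℝ)

/-- `a(y)_l` for a finitely supported `y` on flats. -/
noncomputable def aDual (y : Set α →₀ ℝ) (l : Set α) : ℝ :=
  y.sum fun F c => c * (deg F l : ℝ)

/-- `r(y)` for a finitely supported `y` on flats. -/
noncomputable def rDual (M : Matroid α) (y : Set α →₀ ℝ) : ℝ :=
  y.sum fun F c => c * (M.rk' F : ℝ)

/-!
Write `J = cl(S ∪ T)`. Since `deg` is monotone and bounded by `2`, supermodularity can only fail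
when `S` and `T` both meet `l` but `S ∩ T` does not; then `deg S l = deg T l = 1` and one needs
`l ⊆ J`. Points `a ∈ (S \ T) ∩ l` and `b ∈ (T \ S) ∩ l` are independent (`b` is not a loop since
loops lie in the flat `S`, and `a ∉ cl {b} ⊆ T`), so in rank at most two `{a, b}` is a basis of
`l`, whence `l ⊆ cl {a, b} ⊆ J`.
-/

lemma deg_eq_zero {X l : Set α} (h : X ∩ l = ∅) : deg X l = 0 := by
  simp [deg, h]

lemma deg_eq_one {X l : Set α} (h : (X ∩ l).Nonempty) (hl : ¬l ⊆ X) : deg X l = 1 := by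
  simp [deg, h.ne_empty, hl]

lemma deg_eq_two {X l : Set α} (h : (X ∩ l).Nonempty) (hl : l ⊆ X) : deg X l = 2 := by
  simp [deg, h.ne_empty, hl]

lemma deg_le_two (X l : Set α) : deg X l ≤ 2 := by
  unfold deg; split_ifs <;> omega

lemma deg_mono {X Y l : Set α} (h : X ⊆ Y) : deg X l ≤ deg Y l := by
  rcases (X ∩ l).eq_empty_or_nonempty with hX | hX
  · simp [deg_eq_zero hX]
  have hY : (Y ∩ l).Nonempty := hX.mono (inter_subset_inter_left l h)
  by_cases hlX : l ⊆ X
  · rw [deg_eq_two hX hlX, deg_eq_two hY (hlX.trans h)]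
  · rw [deg_eq_one hX hlX]
    by_cases hlY : l ⊆ Y
    · rw [deg_eq_two hY hlY]; omega
    · rw [deg_eq_one hY hlY]

lemma deg_add_deg_le {S T J l : Set α} (hSJ : S ⊆ J) (hTJ : T ⊆ J)
    (hJ : (S ∩ l).Nonempty → (T ∩ l).Nonempty → S ∩ T ∩ l = ∅ → l ⊆ J) :
    deg S l + deg T l ≤ deg J l + deg (S ∩ T) l := by
  have hS := deg_mono (l := l) hSJ
  have hT := deg_mono (l := l) hTJ
  suffices deg S l ≤ deg (S ∩ T) l ∨ deg T l ≤ deg (S ∩ T) l ∨ deg S l + deg T l ≤ deg J l by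
    omega
  rcases (S ∩ T ∩ l).eq_empty_or_nonempty with hSTl | hSTl
  · rcases (S ∩ l).eq_empty_or_nonempty with hSl | hSl
    · simp [deg_eq_zero hSl]
    rcases (T ∩ l).eq_empty_or_nonempty with hTl | hTl
    · simp [deg_eq_zero hTl]
    have hlS : ¬l ⊆ S := fun h ↦ hTl.ne_empty <| subset_empty_iff.1 <|
      hSTl ▸ fun x hx ↦ ⟨⟨h hx.2, hx.1⟩, hx.2⟩
    have hlT : ¬l ⊆ T := fun h ↦ hSl.ne_empty <| subset_empty_iff.1 <|
      hSTl ▸ fun x hx ↦ ⟨⟨hx.1, h hx.2⟩, hx.2⟩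
    right; right
    rw [deg_eq_one hSl hlS, deg_eq_one hTl hlT,
      deg_eq_two (hSl.mono (inter_subset_inter_left l hSJ)) (hJ hSl hTl hSTl)]
  by_cases hlST : l ⊆ S ∩ T
  · left
    rw [deg_eq_two hSTl hlST]
    exact deg_le_two S l
  rw [deg_eq_one hSTl hlST]
  rcases not_and_or.1 (mt subset_inter_iff.2 hlST) with hlS | hlT
  · exact Or.inl (deg_eq_one (hSTl.mono (by gcongr; exact inter_subset_left)) hlS).le
  · exact Or.inr (Or.inl (deg_eq_one (hSTl.mono (by gcongr; exact inter_subset_right)) hlT).le)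

namespace Matroid

variable {M : Matroid α} {S T l : Set α} {a b : α}

lemma eRk_eq_rk' (M : Matroid α) [M.RankFinite] (X : Set α) : M.eRk X = M.rk' X := by
  obtain ⟨I, hI⟩ := M.exists_isBasis' X
  have hIfin : I.Finite := hI.indep.finite
  have hmax : IsGreatest {n : ℕ | ∃ J, M.Indep J ∧ J ⊆ X ∧ J.ncard = n} I.ncard := by
    refine ⟨⟨I, hI.indep, hI.subset, rfl⟩, ?_⟩
    rintro _ ⟨J, hJ, hJX, rfl⟩
    have hJI := hJ.encard_le_eRk_of_subset hJX
    rw [← hI.encard_eq_eRk, ← hJ.finite.cast_ncard_eq, ← hIfin.cast_ncard_eq] at hJI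
    exact_mod_cast hJI
  rw [rk', hmax.csSup_eq, hIfin.cast_ncard_eq, hI.encard_eq_eRk]

lemma IsFlat.indep_pair (hS : M.IsFlat S) (hT : M.IsFlat T) (ha : a ∈ S \ T) (hb : b ∈ T \ S) :
    M.Indep {a, b} := by
  have hbi : M.Indep {b} :=
    indep_singleton.2 <| isNonloop_of_not_isLoop (hT.subset_ground hb.1)
      fun hbl ↦ hb.2 (hS.loops_subset hbl)
  refine (hbi.insert_indep_iff_of_notMem ?_).2 ⟨hS.subset_ground ha.1, fun hacl ↦ ha.2 ?_⟩
  · rintro rfl; exact ha.2 hb.1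
  · exact hT.closure ▸ M.closure_mono (singleton_subset_iff.2 hb.1) hacl

lemma IsFlat.subset_closure_union (hS : M.IsFlat S) (hT : M.IsFlat T) (hlE : l ⊆ M.E)
    (hl : M.eRk l ≤ 2) (hSl : (S ∩ l).Nonempty) (hTl : (T ∩ l).Nonempty)
    (hSTl : S ∩ T ∩ l = ∅) : l ⊆ M.closure (S ∪ T) := by
  obtain ⟨a, haS, hal⟩ := hSl
  obtain ⟨b, hbT, hbl⟩ := hTl
  have haT : a ∉ T := fun haT ↦ hSTl.subset ⟨⟨haS, haT⟩, hal⟩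
  have hbS : b ∉ S := fun hbS ↦ hSTl.subset ⟨⟨hbS, hbT⟩, hbl⟩
  have hab := hS.indep_pair hT ⟨haS, haT⟩ ⟨hbT, hbS⟩
  have hbasis : M.IsBasis {a, b} l := by
    refine hab.isBasis_of_eRk_ge (toFinite _) (pair_subset hal hbl) ?_
    rw [hab.eRk_eq_encard, encard_pair (by rintro rfl; exact haT hbT)]
    exact hl
  exact hbasis.subset_closure.trans (M.closure_mono (pair_subset (.inl haS) (.inr hbT)))

end Matroid

theorem stmt_3_general (M : Matroid α) [M.RankFinite]
    (l : Set α) (hlE : l ⊆ M.E) (hl : M.rk' l ≤ 2)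
    (S T : Set α) (hS : M.IsFlat S) (hT : M.IsFlat T) :
    deg S l + deg T l ≤ deg (M.closure (S ∪ T)) l + deg (S ∩ T) l := by
  have hST : S ∪ T ⊆ M.closure (S ∪ T) :=
    M.subset_closure _ (union_subset hS.subset_ground hT.subset_ground)
  have hl' : M.eRk l ≤ 2 := by
    rw [M.eRk_eq_rk']
    exact_mod_cast hl
  exact deg_add_deg_le (subset_union_left.trans hST) (subset_union_right.trans hST)
    (hS.subset_closure_union hT hlE hl')

/-- the degree function `F ↦ a(F)_l` is supermodular on the lattice
of flats, for any subset `l` of the ground set of rank at most 2. -/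
theorem stmt_3 (M : Matroid α) [M.RankFinite] (hM : M.Loopless')
    (l : Set α) (hlE : l ⊆ M.E) (hl : M.rk' l ≤ 2)
    (S T : Set α) (hS : M.IsFlat S) (hT : M.IsFlat T) :
    deg S l + deg T l ≤ deg (M.closure (S ∪ T)) l + deg (S ∩ T) l :=
  stmt_3_general M l hlE hl S T hS hT
end

section
/- Let ∅ = F_0 ⊂ F_1 ⊂ ⋯ ⊂ F_k ⊂ F_{k+1} = E be a chain of flats of M and let X ⊆ E. Writing X_i := X ∩ (F_{i+1} \ F_i) for i = 0,…,k, one has ∑_{i=0}^{k} (r(X_i ∪ F_i) − r(F_i)) ≤ r(X). (The rank of a set does not increase when passing from M to the direct sum of the minors (M|F_{i+1})/F_i.) -/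
open Set

variable {α : Type*}

/-
`rk'` agrees with Mathlib's `eRk`, hence is submodular. Submodularity applied to `X ∩ F (i+1)`
and `F i` bounds the `i`-th summand by `r(X ∩ F (i+1)) - r(X ∩ F i)`, and these bounds telescope
to `r(X ∩ E) - r(∅) = r(X)`.
-/

namespace Matroid

variable (M : Matroid α) [M.RankFinite]

lemma cast_rk' (X : Set α) : (M.rk' X : ℕ∞) = M.eRk X := by
  obtain ⟨m, hm⟩ := ENat.ne_top_iff_exists.1 (eRk_ne_top_iff.2 (M.isRkFinite_set X))
  have hS : {n : ℕ | ∃ I, M.Indep I ∧ I ⊆ X ∧ I.ncard = n} = Iic m := by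
    ext n
    rw [mem_ofPred_eq, mem_Iic, ← ENat.natCast_le_natCast, hm, le_eRk_iff]
    constructor
    · rintro ⟨I, hI, hIX, rfl⟩
      exact ⟨I, hIX, hI, hI.finite.cast_ncard_eq.symm⟩
    · rintro ⟨I, hIX, hI, hIn⟩
      exact ⟨I, hI, hIX, by rwa [← hI.finite.cast_ncard_eq, Nat.cast_inj] at hIn⟩
  rw [rk', hS, csSup_Iic, hm]

lemma rk'_empty : M.rk' ∅ = 0 := by
  exact_mod_cast (M.cast_rk' ∅).trans M.eRk_empty

lemma rk'_inter_ground (X : Set α) : M.rk' (X ∩ M.E) = M.rk' X := by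
  exact_mod_cast (M.cast_rk' _).trans ((M.eRk_inter_ground X).trans (M.cast_rk' X).symm)

lemma rk'_inter_add_rk'_union_le (X Y : Set α) :
    M.rk' (X ∩ Y) + M.rk' (X ∪ Y) ≤ M.rk' X + M.rk' Y := by
  have h := M.eRk_inter_add_eRk_union_le X Y
  simp only [← cast_rk'] at h
  exact_mod_cast h

lemma rk'_inter_sdiff_union_add_le (X : Set α) {Y Z : Set α} (hYZ : Y ⊆ Z) :
    M.rk' (X ∩ (Z \ Y) ∪ Y) + M.rk' (X ∩ Y) ≤ M.rk' (X ∩ Z) + M.rk' Y := by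
  have hunion : X ∩ Z ∪ Y = X ∩ (Z \ Y) ∪ Y := by
    ext e; simp only [mem_union, mem_inter_iff, mem_sdiff]; tauto
  have hinter : X ∩ Z ∩ Y = X ∩ Y := by
    rw [inter_assoc, inter_eq_right.2 hYZ]
  have h := M.rk'_inter_add_rk'_union_le (X ∩ Z) Y
  rw [hunion, hinter] at h
  omega

end Matroid

theorem stmt_7_general (M : Matroid α) [M.RankFinite]
    (k : ℕ) (F : ℕ → Set α) (hF0 : F 0 = ∅) (hFE : F (k+1) = M.E)
    (hFmono : ∀ i ≤ k, F i ⊂ F (i+1))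
    (X : Set α) :
    ∑ i ∈ Finset.range (k+1),
        ((M.rk' (X ∩ (F (i+1) \ F i) ∪ F i) : ℤ) - (M.rk' (F i) : ℤ))
      ≤ (M.rk' X : ℤ) := by
  have hterm : ∀ i ∈ Finset.range (k+1),
      (M.rk' (X ∩ (F (i+1) \ F i) ∪ F i) : ℤ) - M.rk' (F i)
        ≤ (M.rk' (X ∩ F (i+1)) : ℤ) - M.rk' (X ∩ F i) := by
    intro i hi
    have h := M.rk'_inter_sdiff_union_add_le X
      (hFmono i (Nat.lt_succ_iff.1 (Finset.mem_range.1 hi))).subset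
    omega
  calc _ ≤ ∑ i ∈ Finset.range (k+1), ((M.rk' (X ∩ F (i+1)) : ℤ) - M.rk' (X ∩ F i)) :=
        Finset.sum_le_sum hterm
    _ = M.rk' (X ∩ F (k+1)) - M.rk' (X ∩ F 0) :=
        Finset.sum_range_sub (fun i => (M.rk' (X ∩ F i) : ℤ)) (k+1)
    _ = M.rk' X := by
        rw [hF0, hFE, inter_empty, M.rk'_inter_ground, M.rk'_empty, Nat.cast_zero, sub_zero]

/-- the rank of a set does not increase when passing from `M` to the
direct sum of the minors `(M|F_{i+1})/F_i` along a chain of flats. -/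
theorem stmt_7 (M : Matroid α) [M.RankFinite] (hM : M.Loopless')
    (k : ℕ) (F : ℕ → Set α) (hF0 : F 0 = ∅) (hFE : F (k+1) = M.E)
    (hFflat : ∀ i ≤ k+1, M.IsFlat (F i)) (hFmono : ∀ i ≤ k, F i ⊂ F (i+1))
    (X : Set α) (hX : X ⊆ M.E) :
    ∑ i ∈ Finset.range (k+1),
        ((M.rk' (X ∩ (F (i+1) \ F i) ∪ F i) : ℤ) - (M.rk' (F i) : ℤ))
      ≤ (M.rk' X : ℤ) :=
  stmt_7_general M k F hF0 hFE hFmono X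
end

section
/- Let ∅ = F_0 ⊂ F_1 ⊂ ⋯ ⊂ F_k ⊂ F_{k+1} = E and ∅ = F'_0 ⊂ F'_1 ⊂ ⋯ ⊂ F'_m ⊂ F'_{m+1} = E be chains of flats of M with {F_1,…,F_k} ⊆ {F'_1,…,F'_m}. Let X ⊆ E and write X_i := X ∩ (F_{i+1} \ F_i) for i = 0,…,k and X'_j := X ∩ (F'_{j+1} \ F'_j) for j = 0,…,m. Assume ∑_{i=0}^{k} (r(F_i ∪ X_i) − r(F_i)) = ∑_{j=0}^{m} (r(F'_j ∪ X'_j) − r(F'_j)). Then ∑_{i=0}^{k} (r(F_i ∪ X_i)² − r(F_i)²) ≤ ∑_{j=0}^{m} (r(F'_j ∪ X'_j)² − r(F'_j)²), and equality holds if and only if the family of flats {F'_0, F'_1, …, F'_{m+1}} ∪ {cl(F_i ∪ X_i) : i = 0,…,k} is a chain (totally ordered by inclusion). -/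
open Set

variable {α : Type*}

/-!
Each flat `F i` of the coarse chain is some `F' (σ i)`, so the refined sums split into blocks,
one for each interval `F i ⊆ F (i+1)`. Inside a block `G p ⊆ ⋯ ⊆ G q` put
`Y s := G p ∪ X ∩ (G s \ G p)`. Submodularity gives
`r(G j ∪ X_j) - r(G j) ≤ r(Y (j+1)) - r(Y j)`, and the hypothesis on the linear sums forces
equality at every step. For such a tight step, with `a = r(G j ∪ X_j)`, `b = r(G j)`,
`c = r(Y j)`, the quadratic terms differ by
`(a² - b²) - (r(Y (j+1))² - c²) = 2(a - b)(b - c) ≥ 0`,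
which vanishes iff `X_j ⊆ G j` or `G j = cl(Y j)`. Tightness turns the latter into comparability
of `G j` with `cl(Y q) = cl(F i ∪ X_i)`.
-/

namespace Matroid
variable {M : Matroid α} [M.RankFinite] {X Y C D S : Set α}

lemma cast_rk'_eq_eRk (M : Matroid α) [M.RankFinite] (X : Set α) :
    (M.rk' X : ℕ∞) = M.eRk X := by
  obtain ⟨I, hI⟩ := M.exists_isBasis' X
  have hIfin : I.Finite := hI.indep.finite
  have hmax : IsGreatest {n : ℕ | ∃ J, M.Indep J ∧ J ⊆ X ∧ J.ncard = n} I.ncard := by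
    refine ⟨⟨I, hI.indep, hI.subset, rfl⟩, ?_⟩
    rintro _ ⟨J, hJ, hJX, rfl⟩
    have := hJ.encard_le_eRk_of_subset hJX
    rw [hI.eRk_eq_encard, ← hJ.finite.cast_ncard_eq, ← hIfin.cast_ncard_eq] at this
    exact_mod_cast this
  rw [rk', hmax.csSup_eq, hI.eRk_eq_encard, hIfin.cast_ncard_eq]

lemma rk'_mono (h : X ⊆ Y) : M.rk' X ≤ M.rk' Y := by
  have := M.eRk_mono h
  rwa [← cast_rk'_eq_eRk, ← cast_rk'_eq_eRk, Nat.cast_le] at this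

lemma rk'_closure (M : Matroid α) [M.RankFinite] (X : Set α) : M.rk' (M.closure X) = M.rk' X := by
  have := M.eRk_closure_eq X
  rwa [← cast_rk'_eq_eRk, ← cast_rk'_eq_eRk, Nat.cast_inj] at this

lemma rk'_union_add_rk'_inter_le (M : Matroid α) [M.RankFinite] (X Y : Set α) :
    M.rk' (X ∪ Y) + M.rk' (X ∩ Y) ≤ M.rk' X + M.rk' Y := by
  have := M.eRk_inter_add_eRk_union_le X Y
  simp only [← cast_rk'_eq_eRk] at this
  rw [add_comm]; exact_mod_cast this

lemma rk'_insert_of_notMem_closure {e : α} (he : e ∈ M.E \ M.closure X) :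
    M.rk' (insert e X) = M.rk' X + 1 := by
  have := eRk_insert_eq_add_one he
  rw [← cast_rk'_eq_eRk, ← cast_rk'_eq_eRk] at this
  exact_mod_cast this

lemma closure_eq_closure_of_subset_of_rk'_le (hXY : X ⊆ Y) (h : M.rk' Y ≤ M.rk' X) :
    M.closure X = M.closure Y :=
  (M.isRkFinite_set X).closure_eq_closure_of_subset_of_eRk_ge_eRk hXY <| by
    rw [← cast_rk'_eq_eRk, ← cast_rk'_eq_eRk]; exact_mod_cast h

lemma rk'_eq_rk'_iff_subset_closure (hXY : X ⊆ Y) (hY : Y ⊆ M.E) :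
    M.rk' Y = M.rk' X ↔ Y ⊆ M.closure X := by
  refine ⟨fun h ↦ ?_, fun h ↦ le_antisymm ?_ (rk'_mono hXY)⟩
  · rw [closure_eq_closure_of_subset_of_rk'_le hXY h.le]
    exact M.subset_closure Y hY
  · simpa only [rk'_closure] using rk'_mono (M := M) h

lemma rk'_union_add_rk'_le (hCD : C ⊆ D) (S : Set α) :
    M.rk' (D ∪ S) + M.rk' C ≤ M.rk' (C ∪ S) + M.rk' D := by
  have hsub := M.rk'_union_add_rk'_inter_le D (C ∪ S)
  rw [← union_assoc, union_eq_self_of_subset_right hCD] at hsub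
  have := rk'_mono (M := M) (subset_inter hCD subset_union_left : C ⊆ D ∩ (C ∪ S))
  omega

lemma closure_union_inter_subset_closure (hCD : C ⊆ D)
    (h : M.rk' (C ∪ S) + M.rk' D ≤ M.rk' (D ∪ S) + M.rk' C) :
    M.closure (C ∪ S) ∩ D ⊆ M.closure C := by
  rintro e ⟨heS, heD⟩
  by_contra heC
  have hins := rk'_insert_of_notMem_closure ⟨M.closure_subset_ground _ heS, heC⟩
  have hdim := rk'_union_add_rk'_le (M := M) (insert_subset heD hCD) S
  have hle : M.rk' (insert e C ∪ S) = M.rk' (C ∪ S) := by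
    rw [insert_union, ← rk'_closure, closure_insert_eq_of_mem_closure heS, rk'_closure]
  omega

end Matroid

namespace Set
variable {A B C X : Set α}

lemma union_inter_sdiff_subset (hAB : A ⊆ B) : A ∪ X ∩ (B \ A) ⊆ B :=
  union_subset hAB (inter_subset_right.trans sdiff_subset)

lemma union_inter_sdiff_eq_union (hAB : A ⊆ B) (hBC : B ⊆ C) :
    A ∪ X ∩ (C \ A) = (A ∪ X ∩ (B \ A)) ∪ X ∩ (C \ B) := by
  ext x
  simp only [mem_union, mem_inter_iff, mem_sdiff]
  have := @hAB x
  have := @hBC x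
  tauto

lemma union_inter_sdiff_subset_union_inter_sdiff (hBC : B ⊆ C) :
    A ∪ X ∩ (B \ A) ⊆ A ∪ X ∩ (C \ A) :=
  union_subset_union_right _ (inter_subset_inter_right _ (sdiff_subset_sdiff_left hBC))

end Set

lemma sq_sub_sq_le_sq_sub_sq {a b c d : ℤ} (hba : b ≤ a) (hcb : c ≤ b) (h : a - b = d - c) :
    d ^ 2 - c ^ 2 ≤ a ^ 2 - b ^ 2 ∧ (d ^ 2 - c ^ 2 = a ^ 2 - b ^ 2 ↔ a = b ∨ b = c) := by
  have key : a ^ 2 - b ^ 2 - (d ^ 2 - c ^ 2) = 2 * ((a - b) * (b - c)) := by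
    obtain rfl : d = a - b + c := by linarith
    ring
  have hnn : 0 ≤ (a - b) * (b - c) := mul_nonneg (by linarith) (by linarith)
  refine ⟨by linarith, ?_⟩
  rw [← sub_eq_zero (a := a), ← sub_eq_zero (a := b), ← mul_eq_zero]
  constructor <;> intro <;> linarith

lemma MonotoneOn.Icc_le {β : Type*} [Preorder β] {f : ℕ → β} {p q a b : ℕ}
    (hf : MonotoneOn f (Icc p q)) (hpa : p ≤ a) (hab : a ≤ b) (hbq : b ≤ q) : f a ≤ f b :=
  hf ⟨hpa, hab.trans hbq⟩ ⟨hpa.trans hab, hbq⟩ hab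

namespace Matroid
variable {M : Matroid α} {G : ℕ → Set α} {X A B C : Set α} {p q : ℕ}

/-- The paper's `r(F_i ∪ X_i)`, for consecutive flats `A = F_i ⊆ B = F_{i+1}`. -/
noncomputable def augRk (M : Matroid α) (X A B : Set α) : ℕ := M.rk' (A ∪ X ∩ (B \ A))

lemma augRk_self : M.augRk X A A = M.rk' A := by
  simp [augRk]

lemma IsFlat.closure_union_inter_sdiff_mem_Icc (hB : M.IsFlat B) (hAB : A ⊆ B) :
    M.closure (A ∪ X ∩ (B \ A)) ∈ Icc A B :=
  ⟨subset_union_left.trans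
    (M.subset_closure _ ((union_inter_sdiff_subset hAB).trans hB.subset_ground)),
    (M.closure_subset_closure (union_inter_sdiff_subset hAB)).trans hB.closure.subset⟩

variable [M.RankFinite]

lemma rk'_le_augRk : M.rk' A ≤ M.augRk X A B :=
  rk'_mono subset_union_left

lemma augRk_le_rk' (hAB : A ⊆ B) : M.augRk X A B ≤ M.rk' B :=
  rk'_mono (union_inter_sdiff_subset hAB)

lemma augRk_add_augRk_le (hAB : A ⊆ B) (hBC : B ⊆ C) :
    M.augRk X B C + M.augRk X A B ≤ M.augRk X A C + M.rk' B := by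
  rw [augRk, augRk, augRk, union_inter_sdiff_eq_union hAB hBC]
  exact rk'_union_add_rk'_le (union_inter_sdiff_subset hAB) _

lemma closure_union_inter_sdiff_inter_subset (hAB : A ⊆ B) (hBC : B ⊆ C)
    (h : M.augRk X A C + M.rk' B ≤ M.augRk X B C + M.augRk X A B) :
    M.closure (A ∪ X ∩ (C \ A)) ∩ B ⊆ M.closure (A ∪ X ∩ (B \ A)) := by
  rw [union_inter_sdiff_eq_union hAB hBC]
  refine closure_union_inter_subset_closure (union_inter_sdiff_subset hAB) ?_
  rwa [← union_inter_sdiff_eq_union hAB hBC]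

lemma augRk_eq_rk'_iff (hA : M.IsFlat A) (hB : B ⊆ M.E) :
    M.augRk X A B = M.rk' A ↔ X ∩ (B \ A) ⊆ A := by
  rw [augRk, rk'_eq_rk'_iff_subset_closure subset_union_left
    (union_subset hA.subset_ground (inter_subset_right.trans (sdiff_subset.trans hB))),
    hA.closure, union_subset_iff]
  exact and_iff_right subset_rfl

lemma augRk_sub_rk'_le_augRk_sub_augRk (hG : MonotoneOn G (Icc p q)) {j : ℕ}
    (hj : j ∈ Finset.Ico p q) :
    (M.augRk X (G j) (G (j + 1)) : ℤ) - M.rk' (G j)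
      ≤ (M.augRk X (G p) (G (j + 1)) : ℤ) - M.augRk X (G p) (G j) := by
  obtain ⟨hpj, hjq⟩ := Finset.mem_Ico.mp hj
  have := augRk_add_augRk_le (M := M) (X := X) (hG.Icc_le le_rfl hpj hjq.le)
    (hG.Icc_le hpj (Nat.le_add_right j 1) hjq)
  omega

lemma sum_augRk_sub_rk'_le {n : ℕ} (hG : MonotoneOn G (Iic n)) (hpq : p ≤ q) (hqn : q ≤ n)
    (hA : A = G p) (hB : B = G q) :
    ∑ j ∈ Finset.Ico p q, ((M.augRk X (G j) (G (j + 1)) : ℤ) - M.rk' (G j))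
      ≤ (M.augRk X A B : ℤ) - M.rk' A := by
  subst hA hB
  rw [← augRk_self (X := X) (A := G p),
    ← Finset.sum_Ico_sub (fun s ↦ (M.augRk X (G p) (G s) : ℤ)) hpq]
  exact Finset.sum_le_sum fun j hj ↦
    augRk_sub_rk'_le_augRk_sub_augRk (hG.mono fun j hj ↦ hj.2.trans hqn) hj

lemma augRk_sub_rk'_eq_of_sum_eq (hG : MonotoneOn G (Icc p q)) (hpq : p ≤ q)
    (h : ∑ j ∈ Finset.Ico p q, ((M.augRk X (G j) (G (j + 1)) : ℤ) - M.rk' (G j))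
      = (M.augRk X (G p) (G q) : ℤ) - M.rk' (G p)) :
    ∀ j ∈ Finset.Ico p q, (M.augRk X (G j) (G (j + 1)) : ℤ) - M.rk' (G j)
      = (M.augRk X (G p) (G (j + 1)) : ℤ) - M.augRk X (G p) (G j) := by
  rw [← augRk_self (X := X) (A := G p),
    ← Finset.sum_Ico_sub (fun s ↦ (M.augRk X (G p) (G s) : ℤ)) hpq] at h
  exact (Finset.sum_eq_sum_iff_of_le fun j hj ↦ augRk_sub_rk'_le_augRk_sub_augRk hG hj).mp h

lemma sq_sub_sq_le_sum_of_augRk_sub_rk'_eq (hG : MonotoneOn G (Icc p q)) (hpq : p ≤ q)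
    (htight : ∀ j ∈ Finset.Ico p q, (M.augRk X (G j) (G (j + 1)) : ℤ) - M.rk' (G j)
      = (M.augRk X (G p) (G (j + 1)) : ℤ) - M.augRk X (G p) (G j)) :
    (M.augRk X (G p) (G q) : ℤ) ^ 2 - (M.rk' (G p) : ℤ) ^ 2
        ≤ ∑ j ∈ Finset.Ico p q,
            ((M.augRk X (G j) (G (j + 1)) : ℤ) ^ 2 - (M.rk' (G j) : ℤ) ^ 2)
      ∧ ((M.augRk X (G p) (G q) : ℤ) ^ 2 - (M.rk' (G p) : ℤ) ^ 2
        = ∑ j ∈ Finset.Ico p q,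
            ((M.augRk X (G j) (G (j + 1)) : ℤ) ^ 2 - (M.rk' (G j) : ℤ) ^ 2)
        ↔ ∀ j ∈ Finset.Ico p q, M.augRk X (G j) (G (j + 1)) = M.rk' (G j)
          ∨ M.rk' (G j) = M.augRk X (G p) (G j)) := by
  have hstep (j : ℕ) (hj : j ∈ Finset.Ico p q) := sq_sub_sq_le_sq_sub_sq
    (Nat.cast_le.mpr rk'_le_augRk)
    (Nat.cast_le.mpr (augRk_le_rk' (hG.Icc_le le_rfl (Finset.mem_Ico.mp hj).1
      (Finset.mem_Ico.mp hj).2.le))) (htight j hj)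
  rw [← augRk_self (X := X) (A := G p),
    ← Finset.sum_Ico_sub (fun s ↦ (M.augRk X (G p) (G s) : ℤ) ^ 2) hpq]
  refine ⟨Finset.sum_le_sum fun j hj ↦ (hstep j hj).1, ?_⟩
  rw [Finset.sum_eq_sum_iff_of_le fun j hj ↦ (hstep j hj).1]
  refine forall₂_congr fun j hj ↦ (hstep j hj).2.trans ?_
  simp only [Nat.cast_inj]

lemma comparable_closure_of_forall (hG : MonotoneOn G (Icc p q)) (hpq : p ≤ q)
    (hflat : ∀ j ∈ Icc p q, M.IsFlat (G j))
    (h : ∀ j ∈ Finset.Ico p q, M.augRk X (G j) (G (j + 1)) = M.rk' (G j)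
      ∨ M.rk' (G j) = M.augRk X (G p) (G j))
    {j : ℕ} (hpj : p ≤ j) (hjq : j ≤ q) :
    G j ⊆ M.closure (G p ∪ X ∩ (G q \ G p))
      ∨ M.closure (G p ∪ X ∩ (G q \ G p)) ⊆ G j := by
  have hYq : G p ∪ X ∩ (G q \ G p) ⊆ G q :=
    union_inter_sdiff_subset (hG.Icc_le le_rfl hpq le_rfl)
  have hYqE := hYq.trans (hflat q ⟨hpq, le_rfl⟩).subset_ground
  induction hjq using Nat.decreasingInduction with
  | self =>
    exact Or.inr ((M.closure_subset_closure hYq).trans (hflat q ⟨hpq, le_rfl⟩).closure.subset)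
  | of_succ j hjq ih =>
    have hGj := hflat j ⟨hpj, hjq.le⟩
    rcases h j (Finset.mem_Ico.mpr ⟨hpj, hjq⟩) with hab | hbc
    · rw [augRk_eq_rk'_iff hGj (hflat (j + 1) ⟨by omega, hjq⟩).subset_ground] at hab
      rcases ih (by omega) with hsub | hsup
      · exact Or.inl ((hG.Icc_le hpj (Nat.le_add_right j 1) hjq).trans hsub)
      -- `X` has no point in `G (j + 1) \ G j`, so `cl(Y q) ⊆ G (j + 1)` forces `Y q ⊆ G j`
      · refine Or.inr ((M.closure_subset_closure (union_subset (hG.Icc_le le_rfl hpj hjq.le)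
          fun x hx ↦ ?_)).trans hGj.closure.subset)
        by_contra hxj
        exact hxj (hab ⟨hx.1, hsup (M.subset_closure _ hYqE (Or.inr hx)), hxj⟩)
    · rw [augRk, rk'_eq_rk'_iff_subset_closure
        (union_inter_sdiff_subset (hG.Icc_le le_rfl hpj hjq.le)) hGj.subset_ground] at hbc
      exact Or.inl (hbc.trans (M.closure_subset_closure
        (union_inter_sdiff_subset_union_inter_sdiff (hG.Icc_le hpj hjq.le le_rfl))))

lemma forall_of_comparable_closure (hG : MonotoneOn G (Icc p q)) (hpq : p ≤ q)
    (hflat : ∀ j ∈ Icc p q, M.IsFlat (G j))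
    (htight : ∀ j ∈ Finset.Ico p q, (M.augRk X (G j) (G (j + 1)) : ℤ) - M.rk' (G j)
      = (M.augRk X (G p) (G (j + 1)) : ℤ) - M.augRk X (G p) (G j))
    (h : ∀ j, p < j → j < q → G j ⊆ M.closure (G p ∪ X ∩ (G q \ G p))
      ∨ M.closure (G p ∪ X ∩ (G q \ G p)) ⊆ G j) :
    ∀ j ∈ Finset.Ico p q, M.augRk X (G j) (G (j + 1)) = M.rk' (G j)
      ∨ M.rk' (G j) = M.augRk X (G p) (G j) := by
  intro j hj
  obtain ⟨hpj, hjq⟩ := Finset.mem_Ico.mp hj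
  rcases hpj.eq_or_lt with rfl | hpj
  · exact Or.inr augRk_self.symm
  have hGj := hflat j ⟨hpj.le, hjq.le⟩
  rcases h j hpj hjq with hGZ | hZG
  · right
    rw [augRk, rk'_eq_rk'_iff_subset_closure
      (union_inter_sdiff_subset (hG.Icc_le le_rfl hpj.le hjq.le)) hGj.subset_ground]
    -- each tight step `s` adds nothing of `G s` (hence of `G j`) to the closure
    have key : ∀ s, j ≤ s → s ≤ q →
        G j ∩ M.closure (G p ∪ X ∩ (G s \ G p))
          ⊆ M.closure (G p ∪ X ∩ (G j \ G p)) := by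
      intro s hjs
      induction s, hjs using Nat.le_induction with
      | base => exact fun _ ↦ inter_subset_right
      | succ s hjs ih =>
        intro hsq
        have hcl := closure_union_inter_sdiff_inter_subset (M := M) (X := X)
          (hG.Icc_le le_rfl (hpj.le.trans hjs) (by omega)) (hG.Icc_le (by omega)
          (Nat.le_add_right s 1) hsq)
          (by have := htight s (Finset.mem_Ico.mpr ⟨by omega, by omega⟩); omega)
        exact fun x hx ↦
          ih (by omega) ⟨hx.1, hcl ⟨hx.2, hG.Icc_le hpj.le hjs (by omega) hx.1⟩⟩
    exact fun x hx ↦ key q hjq.le le_rfl ⟨hx, hGZ hx⟩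
  · left
    rw [augRk_eq_rk'_iff hGj (hflat (j + 1) ⟨by omega, hjq⟩).subset_ground]
    rintro x ⟨hxX, hx1, hxj⟩
    have hYqE := (union_inter_sdiff_subset (X := X) (hG.Icc_le le_rfl hpq le_rfl)).trans
      (hflat q ⟨hpq, le_rfl⟩).subset_ground
    exact hZG (M.subset_closure _ hYqE (Or.inr ⟨hxX, hG.Icc_le (by omega) hjq le_rfl hx1,
      fun hxp ↦ hxj (hG.Icc_le le_rfl hpj.le hjq.le hxp)⟩))

theorem sq_sub_sq_le_sum_and_eq_iff {n : ℕ} (hG : MonotoneOn G (Iic n))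
    (hflat : ∀ j ≤ n, M.IsFlat (G j)) (hpq : p ≤ q) (hqn : q ≤ n)
    (hA : A = G p) (hB : B = G q)
    (hlin : ∑ j ∈ Finset.Ico p q, ((M.augRk X (G j) (G (j + 1)) : ℤ) - M.rk' (G j))
      = (M.augRk X A B : ℤ) - M.rk' A) :
    (M.augRk X A B : ℤ) ^ 2 - (M.rk' A : ℤ) ^ 2
        ≤ ∑ j ∈ Finset.Ico p q,
            ((M.augRk X (G j) (G (j + 1)) : ℤ) ^ 2 - (M.rk' (G j) : ℤ) ^ 2)
      ∧ ((M.augRk X A B : ℤ) ^ 2 - (M.rk' A : ℤ) ^ 2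
        = ∑ j ∈ Finset.Ico p q,
            ((M.augRk X (G j) (G (j + 1)) : ℤ) ^ 2 - (M.rk' (G j) : ℤ) ^ 2)
        ↔ ∀ j, p < j → j < q → G j ⊆ M.closure (A ∪ X ∩ (B \ A))
          ∨ M.closure (A ∪ X ∩ (B \ A)) ⊆ G j) := by
  subst hA hB
  have hG' : MonotoneOn G (Icc p q) := hG.mono fun j hj ↦ hj.2.trans hqn
  have hflat' : ∀ j ∈ Icc p q, M.IsFlat (G j) := fun j hj ↦ hflat j (hj.2.trans hqn)
  have htight := augRk_sub_rk'_eq_of_sum_eq hG' hpq hlin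
  obtain ⟨hle, hiff⟩ := sq_sub_sq_le_sum_of_augRk_sub_rk'_eq hG' hpq htight
  exact ⟨hle, hiff.trans ⟨fun h j hpj hjq ↦
    comparable_closure_of_forall hG' hpq hflat' h hpj.le hjq.le,
    forall_of_comparable_closure hG' hpq hflat' htight⟩⟩

end Matroid

lemma Finset.sum_Ico_eq_sum_range_sum_Ico {β : Type*} [AddCommMonoid β] (f : ℕ → β)
    {σ : ℕ → ℕ} {n : ℕ} (hσ : MonotoneOn σ (Set.Iic n)) :
    ∑ j ∈ Finset.Ico (σ 0) (σ n), f j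
      = ∑ i ∈ Finset.range n, ∑ j ∈ Finset.Ico (σ i) (σ (i + 1)), f j := by
  induction n with
  | zero => simp
  | succ n ih =>
    rw [Finset.sum_range_succ, ← ih (hσ.mono (Set.Iic_subset_Iic.mpr n.le_succ)),
      Finset.sum_Ico_consecutive]
    · exact hσ (by simp) (by simp) (Nat.zero_le n)
    · exact hσ (by simp) Set.self_mem_Iic n.le_succ

section Reindex
variable {β : Type*} [PartialOrder β] {F F' z : ℕ → β} {σ : ℕ → ℕ} {k m n : ℕ}

lemma exists_monotoneOn_reindex (hF : ∀ i ≤ k, F i < F (i + 1))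
    (hF' : StrictMonoOn F' (Iic (m + 1))) (h0 : F 0 = F' 0) (htop : F (k + 1) = F' (m + 1))
    (hsub : ∀ i, 1 ≤ i → i ≤ k → ∃ j, 1 ≤ j ∧ j ≤ m ∧ F i = F' j) :
    ∃ σ : ℕ → ℕ, MonotoneOn σ (Iic (k + 1)) ∧ σ 0 = 0 ∧ σ (k + 1) = m + 1 ∧
      ∀ i ≤ k + 1, F i = F' (σ i) := by
  have hex (i : ℕ) : ∃ j, i ≤ k + 1 → j ≤ m + 1 ∧ F i = F' j := by
    rcases Nat.eq_zero_or_pos i with rfl | hi0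
    · exact ⟨0, fun _ ↦ ⟨Nat.zero_le _, h0⟩⟩
    rcases Nat.lt_or_ge k i with hki | hik
    · exact ⟨m + 1, fun hi ↦ ⟨le_rfl, by rw [show i = k + 1 by omega, htop]⟩⟩
    · obtain ⟨j, -, hjm, hj⟩ := hsub i hi0 hik
      exact ⟨j, fun _ ↦ ⟨by omega, hj⟩⟩
  choose σ hσ using hex
  have hσ_eq {i j : ℕ} (hi : i ≤ k + 1) (hj : j ≤ m + 1) (h : F i = F' j) : σ i = j :=
    hF'.injOn (hσ i hi).1 hj ((hσ i hi).2.symm.trans h)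
  refine ⟨σ, (strictMonoOn_Iic_of_lt_succ fun i hi ↦ ?_).monotoneOn, hσ_eq (Nat.zero_le _)
    (Nat.zero_le _) h0, hσ_eq le_rfl le_rfl htop, fun i hi ↦ (hσ i hi).2⟩
  rw [Nat.succ_eq_succ]
  by_contra! hle
  have hi : i ≤ k := by omega
  refine (hF i hi).not_ge ?_
  rw [(hσ i (by omega)).2, (hσ (i + 1) (by omega)).2]
  exact hF'.monotoneOn (hσ (i + 1) (by omega)).1 (hσ i (by omega)).1 hle

lemma isChain_union_iff (hf : MonotoneOn F' (Iic n)) (hσ : MonotoneOn σ (Iic (k + 1)))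
    (hσk : σ (k + 1) = n) (hz : ∀ i ≤ k, z i ∈ Icc (F' (σ i)) (F' (σ (i + 1)))) :
    IsChain (· ≤ ·) ({b | ∃ j ≤ n, b = F' j} ∪ {b | ∃ i ≤ k, b = z i}) ↔
      ∀ i ≤ k, ∀ j, σ i < j → j < σ (i + 1) → F' j ≤ z i ∨ z i ≤ F' j := by
  have hσn {i : ℕ} (hi : i ≤ k + 1) : σ i ≤ n := hσk ▸ hσ hi self_mem_Iic hi
  refine ⟨fun hc i hi j hij hji ↦ ?_, fun h ↦ ?_⟩
  · by_cases heq : F' j = z i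
    · exact Or.inl heq.le
    · exact hc (Or.inl ⟨j, (hji.trans_le (hσn (by omega))).le, rfl⟩) (Or.inr ⟨i, hi, rfl⟩)
        heq
  have hcomp {i j : ℕ} (hi : i ≤ k) (hj : j ≤ n) : F' j ≤ z i ∨ z i ≤ F' j := by
    by_cases hij : j ≤ σ i
    · exact Or.inl ((hf hj (hσn (by omega)) hij).trans (hz i hi).1)
    by_cases hji : σ (i + 1) ≤ j
    · exact Or.inr ((hz i hi).2.trans (hf (hσn (by omega)) hj hji))
    exact h i hi j (by omega) (by omega)
  have hzz {i i' : ℕ} (hii' : i < i') (hi' : i' ≤ k) : z i ≤ z i' :=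
    (hz i (by omega)).2.trans ((hf (hσn (by omega)) (hσn (by omega))
      (hσ (by simp; omega) (by simp; omega) hii')).trans (hz i' hi').1)
  rintro _ (⟨j, hj, rfl⟩ | ⟨i, hi, rfl⟩) _ (⟨j', hj', rfl⟩ | ⟨i', hi', rfl⟩) -
  · exact (le_total j j').imp (hf hj hj') (hf hj' hj)
  · exact hcomp hi' hj
  · exact (hcomp hi hj').symm
  · rcases lt_trichotomy i i' with hii' | rfl | hii'
    · exact Or.inl (hzz hii' hi')
    · exact Or.inl le_rfl
    · exact Or.inr (hzz hii' hi)

end Reindex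

theorem stmt_14_general (M : Matroid α) [M.RankFinite]
    (k m : ℕ) (F F' : ℕ → Set α)
    (hF0 : F 0 = ∅) (hFE : F (k+1) = M.E)
    (hFmono : ∀ i ≤ k, F i ⊂ F (i+1))
    (hF'0 : F' 0 = ∅) (hF'E : F' (m+1) = M.E)
    (hF'flat : ∀ j ≤ m+1, M.IsFlat (F' j)) (hF'mono : ∀ j ≤ m, F' j ⊂ F' (j+1))
    (hsub : ∀ i, 1 ≤ i → i ≤ k → ∃ j, 1 ≤ j ∧ j ≤ m ∧ F i = F' j)
    (X : Set α)
    (hrk : ∑ i ∈ Finset.range (k+1),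
        ((M.rk' (F i ∪ X ∩ (F (i+1) \ F i)) : ℤ) - (M.rk' (F i) : ℤ))
      = ∑ j ∈ Finset.range (m+1),
        ((M.rk' (F' j ∪ X ∩ (F' (j+1) \ F' j)) : ℤ) - (M.rk' (F' j) : ℤ))) :
    (∑ i ∈ Finset.range (k+1),
        ((M.rk' (F i ∪ X ∩ (F (i+1) \ F i)) : ℤ)^2 - (M.rk' (F i) : ℤ)^2)
      ≤ ∑ j ∈ Finset.range (m+1),
        ((M.rk' (F' j ∪ X ∩ (F' (j+1) \ F' j)) : ℤ)^2 - (M.rk' (F' j) : ℤ)^2)) ∧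
    ((∑ i ∈ Finset.range (k+1),
        ((M.rk' (F i ∪ X ∩ (F (i+1) \ F i)) : ℤ)^2 - (M.rk' (F i) : ℤ)^2)
      = ∑ j ∈ Finset.range (m+1),
        ((M.rk' (F' j ∪ X ∩ (F' (j+1) \ F' j)) : ℤ)^2 - (M.rk' (F' j) : ℤ)^2))
      ↔ IsChain (· ⊆ ·)
          ({G : Set α | ∃ j ≤ m+1, G = F' j} ∪
           {G : Set α | ∃ i ≤ k, G = M.closure (F i ∪ X ∩ (F (i+1) \ F i))})) := by
  have hF' : StrictMonoOn F' (Iic (m + 1)) :=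
    strictMonoOn_Iic_of_lt_succ fun j hj ↦ hF'mono j (by omega)
  obtain ⟨σ, hσ, hσ0, hσk, hσF⟩ := exists_monotoneOn_reindex hFmono hF'
    (hF0.trans hF'0.symm) (hFE.trans hF'E.symm) hsub
  have hsplit (g : ℕ → ℤ) : ∑ j ∈ Finset.range (m + 1), g j
      = ∑ i ∈ Finset.range (k + 1), ∑ j ∈ Finset.Ico (σ i) (σ (i + 1)), g j := by
    rw [← Finset.sum_Ico_eq_sum_range_sum_Ico g hσ, hσ0, hσk, Finset.range_eq_Ico]
  have hwin {i : ℕ} (hi : i ∈ Finset.range (k + 1)) :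
      σ i ≤ σ (i + 1) ∧ σ (i + 1) ≤ m + 1 ∧
        F i = F' (σ i) ∧ F (i + 1) = F' (σ (i + 1)) := by
    rw [Finset.mem_range] at hi
    exact ⟨hσ (by simp; omega) (by simp; omega) (by omega),
      hσk ▸ hσ (by simp; omega) self_mem_Iic (by omega), hσF i (by omega),
      hσF (i + 1) (by omega)⟩
  -- each block sum is at most the corresponding coarse term, so `hrk` forces blockwise equality
  have hlin_eq := (Finset.sum_eq_sum_iff_of_le fun i hi ↦ Matroid.sum_augRk_sub_rk'_le (M := M)
    (X := X) hF'.monotoneOn (hwin hi).1 (hwin hi).2.1 (hwin hi).2.2.1 (hwin hi).2.2.2).mp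
    ((hsplit _).symm.trans hrk.symm)
  have hsq (i : ℕ) (hi : i ∈ Finset.range (k + 1)) :=
    Matroid.sq_sub_sq_le_sum_and_eq_iff hF'.monotoneOn hF'flat (hwin hi).1 (hwin hi).2.1
      (hwin hi).2.2.1 (hwin hi).2.2.2 (hlin_eq i hi)
  rw [hsplit]
  refine ⟨Finset.sum_le_sum fun i hi ↦ (hsq i hi).1,
    (Finset.sum_eq_sum_iff_of_le fun i hi ↦ (hsq i hi).1).trans <|
      Iff.trans ?_ (isChain_union_iff hF'.monotoneOn hσ hσk fun i hi ↦ ?_).symm⟩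
  · simp only [Finset.mem_range_succ_iff]
    exact forall₂_congr fun i hi ↦ (hsq i (Finset.mem_range_succ_iff.mpr hi)).2
  · obtain ⟨-, hσm, hFi, hFi'⟩ := hwin (Finset.mem_range_succ_iff.mpr hi)
    rw [← hFi, ← hFi']
    exact (hFi' ▸ hF'flat _ hσm).closure_union_inter_sdiff_mem_Icc (hFmono i hi).subset

/-- refining a chain does not decrease the potential `φ`, provided the
rank in the corresponding matroids `M⋆𝓕` agrees; equality holds iff the refined
chain together with the flats `cl(F_i ∪ X_i)` forms a chain. -/
theorem stmt_14 (M : Matroid α) [M.RankFinite] (hM : M.Loopless')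
    (k m : ℕ) (F F' : ℕ → Set α)
    (hF0 : F 0 = ∅) (hFE : F (k+1) = M.E)
    (hFflat : ∀ i ≤ k+1, M.IsFlat (F i)) (hFmono : ∀ i ≤ k, F i ⊂ F (i+1))
    (hF'0 : F' 0 = ∅) (hF'E : F' (m+1) = M.E)
    (hF'flat : ∀ j ≤ m+1, M.IsFlat (F' j)) (hF'mono : ∀ j ≤ m, F' j ⊂ F' (j+1))
    (hsub : ∀ i, 1 ≤ i → i ≤ k → ∃ j, 1 ≤ j ∧ j ≤ m ∧ F i = F' j)
    (X : Set α) (hX : X ⊆ M.E)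
    (hrk : ∑ i ∈ Finset.range (k+1),
        ((M.rk' (F i ∪ X ∩ (F (i+1) \ F i)) : ℤ) - (M.rk' (F i) : ℤ))
      = ∑ j ∈ Finset.range (m+1),
        ((M.rk' (F' j ∪ X ∩ (F' (j+1) \ F' j)) : ℤ) - (M.rk' (F' j) : ℤ))) :
    (∑ i ∈ Finset.range (k+1),
        ((M.rk' (F i ∪ X ∩ (F (i+1) \ F i)) : ℤ)^2 - (M.rk' (F i) : ℤ)^2)
      ≤ ∑ j ∈ Finset.range (m+1),
        ((M.rk' (F' j ∪ X ∩ (F' (j+1) \ F' j)) : ℤ)^2 - (M.rk' (F' j) : ℤ)^2)) ∧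
    ((∑ i ∈ Finset.range (k+1),
        ((M.rk' (F i ∪ X ∩ (F (i+1) \ F i)) : ℤ)^2 - (M.rk' (F i) : ℤ)^2)
      = ∑ j ∈ Finset.range (m+1),
        ((M.rk' (F' j ∪ X ∩ (F' (j+1) \ F' j)) : ℤ)^2 - (M.rk' (F' j) : ℤ)^2))
      ↔ IsChain (· ⊆ ·)
          ({G : Set α | ∃ j ≤ m+1, G = F' j} ∪
           {G : Set α | ∃ i ≤ k, G = M.closure (F i ∪ X ∩ (F (i+1) \ F i))})) :=
  stmt_14_general M k m F F' hF0 hFE hFmono hF'0 hF'E hF'flat hF'mono hsub X hrk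
end
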